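/- Assume 0 ≤ p < 1 and N ≥ 1 (so that 0 < Q(0)). For every natural number n, the tail of the series for the expected consecutive-loss length satisfies 0 ≤ Σ_{i=n+1}^{∞} Σ_{(b_1,…,b_i) ∈ M_i} (T(b_1,…,b_i)/R(b_1,…,b_i)) · P(b_1)·P(b_2)⋯P(b_i) · Q(0) ≤ (N·(n+1)·(1−Q(0))^{n+1} − N·n·(1−Q(0))^{n+2}) / Q(0); in particular the double series converges. -/

import Mathlib

/-- The media block `B`: the first `N` of the `N + K` packet indices. -/
def mediaB (N K : ℕ) : Finset (Fin (N + K)) :=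
  Finset.univ.filter (fun i => (i : ℕ) < N)

/-- `U(S)`: the number of unrecoverable losses among the media packets when the set
of packets lost in the network is `S`. Erasure coding recovers everything iff at
most `K` packets are lost. -/
def unrec (N K : ℕ) (S : Finset (Fin (N + K))) : ℕ :=
  if K < S.card then (S ∩ mediaB N K).card else 0

/-- `Q m`: the probability (under i.i.d. Bernoulli(p) network losses) that exactly
`m` unrecoverable losses remain in the block. -/
noncomputable def Q (N K : ℕ) (p : ℝ) (m : ℕ) : ℝ :=
  ∑ S ∈ Finset.univ.filter (fun S : Finset (Fin (N + K)) => unrec N K S = m),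
    p ^ S.card * (1 - p) ^ (N + K - S.card)

/-- Auxiliary function: `rowLengthsAux l n` computes the lengths of the maximal runs of
`true` in `l`, assuming a run of `true`s of length `n` is currently in progress. -/
def rowLengthsAux : List Bool → ℕ → List ℕ
  | [], 0 => []
  | [], n + 1 => [n + 1]
  | true :: t, n => rowLengthsAux t (n + 1)
  | false :: t, 0 => rowLengthsAux t 0
  | false :: t, n + 1 => (n + 1) :: rowLengthsAux t 0

/-- The lengths, in order, of the maximal runs of consecutive `true` entries (loss rows). -/
def rowLengths (l : List Bool) : List ℕ := rowLengthsAux l 0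

/-- The number of loss rows (maximal runs of consecutive `true` entries) of `l`. -/
def runs (l : List Bool) : ℕ := (rowLengths l).length

/-- The loss vector `(s, (a₁, …, a_j), e)` of a block pattern: `a₁, …, a_j` are the lengths
of the loss rows in order, `s = 0` iff the first packet is lost, `e = 0` iff the last
packet is lost. -/
def lossVector (l : List Bool) : ℕ × List ℕ × ℕ :=
  ((if l.head? = some true then 0 else 1),
    rowLengths l,
    (if l.getLast? = some true then 0 else 1))

/-- The post-erasure probability `P(b) = Q(m_b) / C(N, m_b)` of a block pattern `b`
(represented as a function `Fin N → Bool`), where `m_b` is its number of `true` entries. -/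
noncomputable def blockP (N K : ℕ) (p : ℝ) (f : Fin N → Bool) : ℝ :=
  Q N K p ((List.ofFn f).count true) / ((N.choose ((List.ofFn f).count true)) : ℝ)

/-- The inner sum, over all multiblock patterns `(b₁, …, b_i) ∈ M_i` (tuples of `i` block
patterns each containing at least one loss), of
`(T(b₁,…,b_i) / R(b₁,…,b_i)) · P(b₁)⋯P(b_i) · Q(0)`, where `T` is the total number of
losses and `R` is the number of loss rows of the concatenation. -/
noncomputable def innerSum (N K : ℕ) (p : ℝ) (i : ℕ) : ℝ :=
  ∑ c ∈ Finset.univ.filter (fun c : Fin i → Fin N → Bool => ∀ k, ∃ j, c k j = true),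
    (((∑ k, (List.ofFn (c k)).count true : ℕ) : ℝ) /
        ((runs ((List.ofFn fun k => List.ofFn (c k)).flatten) : ℕ) : ℝ)) *
      (∏ k, blockP N K p (c k)) * Q N K p 0


section Aux

lemma countP_eq_sum_map {α : Type*} (p : α → Bool) (l : List α) :
    l.countP p = (l.map (fun a => if p a = true then 1 else 0)).sum := by
  induction l with
  | nil => simp
  | cons a t ih =>
    by_cases h : p a <;> simp [List.countP_cons, h, ih, Nat.add_comm]

lemma count_ofFn_eq_card {N : ℕ} (f : Fin N → Bool) :
    (List.ofFn f).count true = (Finset.univ.filter (fun j => f j = true)).card := by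
  rw [List.ofFn_eq_map, List.count_eq_countP, List.countP_map,
    Finset.card_filter, Fin.sum_univ_def, countP_eq_sum_map]
  simp

lemma card_fiber (N m : ℕ) :
    (Finset.univ.filter (fun f : Fin N → Bool => (List.ofFn f).count true = m)).card
      = N.choose m := by
  have : (Finset.univ.filter (fun f : Fin N → Bool => (List.ofFn f).count true = m)).card
      = (Finset.powersetCard m (Finset.univ : Finset (Fin N))).card := by
    refine Finset.card_nbij' (fun f => Finset.univ.filter (fun j => f j = true))
      (fun s => fun j => decide (j ∈ s)) ?_ ?_ ?_ ?_
    · intro f hf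
      simp only [Finset.mem_coe, Finset.mem_filter, Finset.mem_univ, true_and] at hf
      simp [Finset.mem_powersetCard, ← count_ofFn_eq_card, hf]
    · intro s hs
      simp only [Finset.mem_coe, Finset.mem_powersetCard] at hs
      simp only [Finset.mem_coe, Finset.mem_filter, Finset.mem_univ, true_and, count_ofFn_eq_card]
      rw [← hs.2]
      congr 1
      ext j
      simp
    · intro f _
      funext j
      simp
    · intro s _
      ext j
      simp
  rw [this, Finset.card_powersetCard, Finset.card_univ, Fintype.card_fin]

lemma sum_subsets (M : ℕ) (p : ℝ) :
    ∑ S : Finset (Fin M), p ^ S.card * (1 - p) ^ (M - S.card) = 1 := by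
  have h := Finset.prod_add (fun _ : Fin M => p) (fun _ : Fin M => 1 - p) Finset.univ
  simp only [add_sub_cancel, Finset.prod_const, one_pow, Finset.powerset_univ,
    Finset.card_sdiff_of_subset (Finset.subset_univ _), Finset.card_univ, Fintype.card_fin] at h
  rw [← h]

lemma card_mediaB (N K : ℕ) : (mediaB N K).card = N := by
  rw [mediaB]
  rw [show (Finset.univ.filter (fun i : Fin (N+K) => (i:ℕ) < N))
      = Finset.univ.image (Fin.castAdd K : Fin N → Fin (N+K)) from ?_]
  · rw [Finset.card_image_of_injective _ (Fin.castAdd_injective N K), Finset.card_univ,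
      Fintype.card_fin]
  · ext i
    simp only [Finset.mem_filter, Finset.mem_univ, true_and, Finset.mem_image]
    constructor
    · intro hi
      exact ⟨⟨i, hi⟩, by simp [Fin.ext_iff]⟩
    · rintro ⟨j, -, rfl⟩
      simpa using j.2

lemma unrec_le (N K : ℕ) (S : Finset (Fin (N + K))) : unrec N K S ≤ N := by
  rw [unrec]
  split
  · exact le_trans (Finset.card_le_card Finset.inter_subset_right) (card_mediaB N K).le
  · exact Nat.zero_le _

lemma Q_nonneg (N K : ℕ) (p : ℝ) (hp0 : 0 ≤ p) (hp1 : p < 1) (m : ℕ) : 0 ≤ Q N K p m :=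
  Finset.sum_nonneg fun S _ => mul_nonneg (pow_nonneg hp0 _) (pow_nonneg (by linarith) _)

lemma sum_Q (N K : ℕ) (p : ℝ) : ∑ m ∈ Finset.range (N+1), Q N K p m = 1 := by
  rw [← sum_subsets (N+K) p]
  rw [← Finset.sum_fiberwise_of_maps_to (fun S _ => Finset.mem_range.2
    (Nat.lt_succ_of_le (unrec_le N K S))) (fun S => p ^ S.card * (1 - p) ^ (N + K - S.card))]
  rfl

lemma Q0_pos (N K : ℕ) (p : ℝ) (hp0 : 0 ≤ p) (hp1 : p < 1) : 0 < Q N K p 0 := by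
  have h0 : (∅ : Finset (Fin (N+K))) ∈ Finset.univ.filter
      (fun S : Finset (Fin (N + K)) => unrec N K S = 0) := by
    simp [unrec]
  refine Finset.sum_pos' (fun S _ => mul_nonneg (pow_nonneg hp0 _)
    (pow_nonneg (by linarith) _)) ⟨∅, h0, ?_⟩
  simp only [Finset.card_empty, pow_zero, one_mul, Nat.sub_zero]
  exact pow_pos (by linarith) _

lemma Q0_le_one (N K : ℕ) (p : ℝ) (hp0 : 0 ≤ p) (hp1 : p < 1) :
    Q N K p 0 ≤ 1 := by
  rw [← sum_Q N K p]
  have h : Q N K p 0 = ∑ m ∈ {0}, Q N K p m := by simp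
  rw [h]
  exact Finset.sum_le_sum_of_subset_of_nonneg (by simp) fun m _ _ => Q_nonneg N K p hp0 hp1 m

lemma count_le (N : ℕ) (f : Fin N → Bool) : (List.ofFn f).count true ≤ N := by
  simpa using (List.count_le_length : (List.ofFn f).count true ≤ _)

lemma blockP_nonneg (N K : ℕ) (p : ℝ) (hp0 : 0 ≤ p) (hp1 : p < 1) (f : Fin N → Bool) :
    0 ≤ blockP N K p f :=
  div_nonneg (Q_nonneg N K p hp0 hp1 _) (Nat.cast_nonneg _)

lemma sum_blockP_all (N K : ℕ) (p : ℝ) : ∑ f : Fin N → Bool, blockP N K p f = 1 := by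
  rw [← Finset.sum_fiberwise_of_maps_to
    (fun f (_ : f ∈ Finset.univ) => Finset.mem_range.2 (Nat.lt_succ_of_le (count_le N f)))
    (blockP N K p), ← sum_Q N K p]
  refine Finset.sum_congr rfl fun m hm => ?_
  have hm' : m ≤ N := Nat.lt_succ_iff.1 (Finset.mem_range.1 hm)
  have h : ∀ f ∈ Finset.univ.filter (fun f : Fin N → Bool => (List.ofFn f).count true = m),
      blockP N K p f = Q N K p m / (N.choose m : ℝ) := by
    intro f hf
    simp only [Finset.mem_filter] at hf
    rw [blockP, hf.2]
  rw [Finset.sum_congr rfl h, Finset.sum_const, card_fiber, nsmul_eq_mul]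
  rw [mul_div_cancel₀ _ (Nat.cast_ne_zero.2 (Nat.choose_pos hm').ne' : (N.choose m:ℝ) ≠ 0)]

lemma sum_blockP_pos (N K : ℕ) (p : ℝ) :
    ∑ f ∈ Finset.univ.filter (fun f : Fin N → Bool => ∃ j, f j = true),
      blockP N K p f = 1 - Q N K p 0 := by
  have hsplit := Finset.sum_filter_add_sum_filter_not Finset.univ
    (fun f : Fin N → Bool => ∃ j, f j = true) (blockP N K p)
  rw [sum_blockP_all] at hsplit
  have hneg : Finset.univ.filter (fun f : Fin N → Bool => ¬ ∃ j, f j = true)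
      = {fun _ => false} := by
    ext f
    simp only [Finset.mem_filter, Finset.mem_univ, true_and, Finset.mem_singleton,
      not_exists]
    constructor
    · intro h; funext j; simpa using h j
    · rintro rfl j; simp
  rw [hneg, Finset.sum_singleton] at hsplit
  have hb : blockP N K p (fun _ => false) = Q N K p 0 := by
    have h0 : (List.ofFn (fun _ : Fin N => false)).count true = 0 := by
      simp [List.count_eq_zero]
    rw [blockP, h0]
    simp
  rw [hb] at hsplit
  linarith

lemma sum_prod_blockP (N K i : ℕ) (p : ℝ) :
    ∑ c ∈ Finset.univ.filter (fun c : Fin i → Fin N → Bool => ∀ k, ∃ j, c k j = true),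
      ∏ k, blockP N K p (c k) = (1 - Q N K p 0) ^ i := by
  have hset : Finset.univ.filter (fun c : Fin i → Fin N → Bool => ∀ k, ∃ j, c k j = true)
      = Fintype.piFinset (fun _ : Fin i =>
          Finset.univ.filter (fun f : Fin N → Bool => ∃ j, f j = true)) := by
    ext c
    simp [Fintype.mem_piFinset]
  rw [hset, ← Finset.prod_univ_sum]
  simp [sum_blockP_pos]

lemma innerSum_nonneg (N K : ℕ) (p : ℝ) (hp0 : 0 ≤ p) (hp1 : p < 1) (i : ℕ) :
    0 ≤ innerSum N K p i := by
  refine Finset.sum_nonneg fun c _ => ?_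
  refine mul_nonneg (mul_nonneg (div_nonneg (Nat.cast_nonneg _) (Nat.cast_nonneg _)) ?_)
    (Q_nonneg N K p hp0 hp1 0)
  exact Finset.prod_nonneg fun k _ => blockP_nonneg N K p hp0 hp1 _

lemma innerSum_le (N K : ℕ) (p : ℝ) (hp0 : 0 ≤ p) (hp1 : p < 1) (i : ℕ) :
    innerSum N K p i ≤ (N : ℝ) * (i : ℝ) * (1 - Q N K p 0) ^ i * Q N K p 0 := by
  rw [innerSum]
  have hstep : ∀ c ∈ Finset.univ.filter
      (fun c : Fin i → Fin N → Bool => ∀ k, ∃ j, c k j = true),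
      (((∑ k, (List.ofFn (c k)).count true : ℕ) : ℝ) /
          ((runs ((List.ofFn fun k => List.ofFn (c k)).flatten) : ℕ) : ℝ)) *
        (∏ k, blockP N K p (c k)) * Q N K p 0
      ≤ ((N : ℝ) * (i : ℝ)) * ((∏ k, blockP N K p (c k)) * Q N K p 0) := by
    intro c _
    rw [mul_assoc]
    refine mul_le_mul_of_nonneg_right ?_ (mul_nonneg
      (Finset.prod_nonneg fun k _ => blockP_nonneg N K p hp0 hp1 _)
      (Q_nonneg N K p hp0 hp1 0))
    set R : ℕ := runs ((List.ofFn fun k => List.ofFn (c k)).flatten)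
    have hT : ((∑ k, (List.ofFn (c k)).count true : ℕ) : ℝ) ≤ (N : ℝ) * (i : ℝ) := by
      have : (∑ k, (List.ofFn (c k)).count true) ≤ ∑ _k : Fin i, N :=
        Finset.sum_le_sum fun k _ => count_le N (c k)
      have h2 : (∑ _k : Fin i, N) = i * N := by simp [Finset.sum_const, Finset.card_univ]
      calc ((∑ k, (List.ofFn (c k)).count true : ℕ) : ℝ)
          ≤ ((i * N : ℕ) : ℝ) := by exact_mod_cast h2 ▸ this
        _ = (N : ℝ) * (i : ℝ) := by push_cast; ring
    rcases Nat.eq_zero_or_pos R with hR | hR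
    · rw [hR]
      simp only [Nat.cast_zero, div_zero]
      positivity
    · have hR1 : (1 : ℝ) ≤ (R : ℝ) := by exact_mod_cast hR
      calc ((∑ k, (List.ofFn (c k)).count true : ℕ) : ℝ) / (R : ℝ)
          ≤ ((∑ k, (List.ofFn (c k)).count true : ℕ) : ℝ) :=
            div_le_self (Nat.cast_nonneg _) hR1
        _ ≤ (N : ℝ) * (i : ℝ) := hT
  calc _ ≤ ∑ c ∈ Finset.univ.filter
        (fun c : Fin i → Fin N → Bool => ∀ k, ∃ j, c k j = true),
        ((N : ℝ) * (i : ℝ)) * ((∏ k, blockP N K p (c k)) * Q N K p 0) :=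
      Finset.sum_le_sum hstep
    _ = (N : ℝ) * (i : ℝ) * (1 - Q N K p 0) ^ i * Q N K p 0 := by
      rw [← Finset.mul_sum, ← Finset.sum_mul, sum_prod_blockP]
      ring

end Aux

theorem stmt_12 (N K : ℕ) (p : ℝ) (hp0 : 0 ≤ p) (hp1 : p < 1) (hN : 1 ≤ N) (n : ℕ) :
    Summable (fun i : ℕ => innerSum N K p (i + n + 1)) ∧
    0 ≤ ∑' i : ℕ, innerSum N K p (i + n + 1) ∧
    ∑' i : ℕ, innerSum N K p (i + n + 1) ≤
      ((N : ℝ) * ((n : ℝ) + 1) * (1 - Q N K p 0) ^ (n + 1) -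
        (N : ℝ) * (n : ℝ) * (1 - Q N K p 0) ^ (n + 2)) / Q N K p 0 :=  by
  set q : ℝ := Q N K p 0 with hq
  set x : ℝ := 1 - q with hx
  have hq0 : 0 < q := Q0_pos N K p hp0 hp1
  have hq1 : q ≤ 1 := Q0_le_one N K p hp0 hp1
  have hx0 : 0 ≤ x := by rw [hx]; linarith
  have hx1 : x < 1 := by rw [hx]; linarith
  have hxn : ‖x‖ < 1 := by rw [Real.norm_eq_abs, abs_of_nonneg hx0]; exact hx1
  have hs1 : Summable (fun i : ℕ => (i : ℝ) * x ^ i) := by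
    simpa using summable_pow_mul_geometric_of_norm_lt_one (k := 1) hxn
  have hs0 : Summable (fun i : ℕ => x ^ i) := summable_geometric_of_lt_one hx0 hx1
  set m : ℕ := n + 1 with hm
  set g : ℕ → ℝ := fun i => (N : ℝ) * ((i : ℝ) + (n : ℝ) + 1) * x ^ (i + n + 1) * q with hg
  have key : ∀ i : ℕ, g i
      = ((N : ℝ) * q * x ^ m) * ((i:ℝ) * x ^ i) + ((N : ℝ) * q * ((m:ℝ) * x ^ m)) * x ^ i := by
    intro i
    rw [hg]
    have h1 : ((i:ℝ) + (n:ℝ) + 1) = (i:ℝ) + (m:ℝ) := by push_cast [hm]; ring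
    simp only [h1, show i + n + 1 = i + m from rfl, pow_add]
    ring
  have hgs : Summable g :=
    (((hs1.mul_left _).add (hs0.mul_left _)).congr fun i => (key i).symm)
  have hle : ∀ i : ℕ, innerSum N K p (i + n + 1) ≤ g i := by
    intro i
    have := innerSum_le N K p hp0 hp1 (i + n + 1)
    rw [hg]
    simpa [← hq, ← hx] using this
  have hnn : ∀ i : ℕ, 0 ≤ innerSum N K p (i + n + 1) := fun i =>
    innerSum_nonneg N K p hp0 hp1 _
  have hsum : Summable (fun i : ℕ => innerSum N K p (i + n + 1)) :=
    Summable.of_nonneg_of_le hnn hle hgs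
  refine ⟨hsum, tsum_nonneg hnn, ?_⟩
  have htg : ∑' i : ℕ, g i
      = ((N : ℝ) * ((n : ℝ) + 1) * x ^ (n + 1) - (N : ℝ) * (n : ℝ) * x ^ (n + 2)) / q := by
    rw [tsum_congr key, Summable.tsum_add ((hs1.mul_left _)) ((hs0.mul_left _)),
      tsum_mul_left, tsum_mul_left, tsum_coe_mul_geometric_of_norm_lt_one hxn,
      tsum_geometric_of_lt_one hx0 hx1]
    have h1 : (1:ℝ) - x = q := by rw [hx]; ring
    have h2 : q ≠ 0 := hq0.ne'
    rw [h1]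
    field_simp
    push_cast [hm]
    ring
  calc ∑' i : ℕ, innerSum N K p (i + n + 1) ≤ ∑' i : ℕ, g i := Summable.tsum_le_tsum hle hsum hgs
    _ = _ := htg
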